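/- arXiv:2201.12993 — 5 statements merged into one kernel-verified Lean document; each statement's English description precedes it below -/
import Mathlib

section
/- Let M ∈ ℝ³ with Euclidean norm |M| < 1, and let C be the 3×3 symmetric matrix with C_kk = M_k² − 1 and C_kk' = (1/2) M_k M_k' for k ≠ k'. Then det(C) < 0; in particular C is nonsingular. -/
theorem stmt2 (M1 M2 M3 : ℝ) (h : M1^2 + M2^2 + M3^2 < 1)
    (C : Matrix (Fin 3) (Fin 3) ℝ)
    (hC : C = !![M1^2 - 1, (1/2) * (M1*M2), (1/2) * (M1*M3);
                 (1/2) * (M1*M2), M2^2 - 1, (1/2) * (M2*M3);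
                 (1/2) * (M1*M3), (1/2) * (M2*M3), M3^2 - 1]) :
    C.det < 0 ∧ IsUnit C := by
  have hdet : C.det < 0 := by
    subst hC
    simp [Matrix.det_fin_three]
    nlinarith [sq_nonneg M1, sq_nonneg M2, sq_nonneg M3, sq_nonneg (M1*M2), sq_nonneg (M2*M3),
      sq_nonneg (M1*M3), sq_nonneg (M1*M2*M3), mul_pos (mul_pos (sub_pos.2 h) (sub_pos.2 h)) (sub_pos.2 h),
      sq_nonneg (M1^2+M2^2+M3^2)]
  exact ⟨hdet, (Matrix.isUnit_iff_isUnit_det C).2 (isUnit_iff_ne_zero.2 (ne_of_lt hdet))⟩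
end

section
/- Fix ℓ ∈ ℕ₀ and complex numbers a_1, a_2, a_3 and b_{12}, b_{13}, b_{23} with a_1 ≠ 0. The linear map sending a family (ξ_i)_{i ∈ ℕ₀³, |i| = ℓ+2} of complex numbers to the family indexed by β ∈ ℕ₀³ with |β| = ℓ given by Σ_{k=1}^{3} (β_k+2)(β_k+1) a_k ξ_{β+2e_k} + Σ_{1≤k<k'≤3} (β_k+1)(β_{k'}+1) b_{kk'} ξ_{β+e_k+e_{k'}} is surjective onto ℂ^{(ℓ+1)(ℓ+2)/2}. -/
/-! Writing `ξ β = x (β 0) (β 1, β 2)`, the equation at `β` involves the layer `x (β 0 + 2)` only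
through `(β 0 + 2) (β 0 + 1) a 0 ξ (β + 2 e 0)`, and otherwise only the layers `x (β 0)` and
`x (β 0 + 1)`. Since `a 0 ≠ 0`, the equations form a second-order recurrence in the layers,
which can be solved starting from two arbitrary layers. -/

/-- The standard unit multi-indices in ℕ₀³. -/
def unitIdx (k : Fin 3) : Fin 3 → ℕ := fun j => if j = k then 1 else 0

theorem exists_seq_of_second_order_recurrence {K M : Type*} [Field K] (c : ℕ → M → K)
    (hc : ∀ n m, c n m ≠ 0) (R : ℕ → (M → K) → (M → K) → M → K) (B : ℕ → M → K) :
    ∃ x : ℕ → M → K, ∀ n m, c n m * x (n + 2) m + R n (x n) (x (n + 1)) m = B n m := by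
  refine ⟨Nat.twoStepInduction 0 0 fun n u v m => (B n m - R n u v m) / c n m, fun n m => ?_⟩
  beta_reduce
  rw [Nat.twoStepInduction.eq_3, mul_div_cancel₀ _ (hc n m), sub_add_cancel]

theorem stmt10 (ℓ : ℕ) (a : Fin 3 → ℂ) (b12 b13 b23 : ℂ) (ha : a 0 ≠ 0) :
    ∀ B : (Fin 3 → ℕ) → ℂ, ∃ ξ : (Fin 3 → ℕ) → ℂ,
      ∀ β : Fin 3 → ℕ, β 0 + β 1 + β 2 = ℓ →
        (∑ k : Fin 3, (((β k + 2) * (β k + 1) : ℕ) : ℂ) * a k * ξ (β + unitIdx k + unitIdx k))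
        + (((β 0 + 1) * (β 1 + 1) : ℕ) : ℂ) * b12 * ξ (β + unitIdx 0 + unitIdx 1)
        + (((β 0 + 1) * (β 2 + 1) : ℕ) : ℂ) * b13 * ξ (β + unitIdx 0 + unitIdx 2)
        + (((β 1 + 1) * (β 2 + 1) : ℕ) : ℂ) * b23 * ξ (β + unitIdx 1 + unitIdx 2)
        = B β := by
  intro B
  obtain ⟨x, hx⟩ := exists_seq_of_second_order_recurrence
    (fun n _ => (((n + 2) * (n + 1) : ℕ) : ℂ) * a 0)
    (fun n _ => mul_ne_zero (Nat.cast_ne_zero.mpr (by positivity)) ha)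
    (fun n u v m =>
      (((m.1 + 2) * (m.1 + 1) : ℕ) : ℂ) * a 1 * u (m.1 + 2, m.2)
      + (((m.2 + 2) * (m.2 + 1) : ℕ) : ℂ) * a 2 * u (m.1, m.2 + 2)
      + (((n + 1) * (m.1 + 1) : ℕ) : ℂ) * b12 * v (m.1 + 1, m.2)
      + (((n + 1) * (m.2 + 1) : ℕ) : ℂ) * b13 * v (m.1, m.2 + 1)
      + (((m.1 + 1) * (m.2 + 1) : ℕ) : ℂ) * b23 * u (m.1 + 1, m.2 + 1))
    (fun n m => B ![n, m.1, m.2])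
  refine ⟨fun γ => x (γ 0) (γ 1, γ 2), fun β _ => ?_⟩
  have hβ : ![β 0, β 1, β 2] = β := by
    funext i; fin_cases i <;> rfl
  have hlayer := hx (β 0) (β 1, β 2)
  simp only [hβ] at hlayer
  simp only [Fin.sum_univ_three, Pi.add_apply, unitIdx, Fin.reduceEq, reduceIte, add_zero]
  linear_combination hlayer
end

section
/- For n ∈ ℕ, define the functions f_i(θ,φ) = (sin φ)^{i1} (cos φ)^{i2} (sin θ)^{i1+i2} (cos θ)^{i3} for multi-indices i ∈ ℕ₀³, and let F_n = {f_i : |i| ≤ n} and F̃_n = {f_i : |i| ≤ n, i1 ∈ {0,1}}. Then span F_n = span F̃_n as subspaces of the space of complex-valued functions on ℝ². -/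
/-- f_i(θ, φ) = (sin φ)^{i₁} (cos φ)^{i₂} (sin θ)^{i₁+i₂} (cos θ)^{i₃}, as a
complex-valued function of (θ, φ) ∈ ℝ². -/
noncomputable def fTrig (i : Fin 3 → ℕ) : ℝ × ℝ → ℂ :=
  fun p => (Real.sin p.2 : ℂ) ^ (i 0) * (Real.cos p.2 : ℂ) ^ (i 1)
    * (Real.sin p.1 : ℂ) ^ (i 0 + i 1) * (Real.cos p.1 : ℂ) ^ (i 2)

lemma fTrig_key (a b c : ℕ) :
    fTrig ![a + 2, b, c] = fTrig ![a, b, c] - fTrig ![a, b, c + 2] - fTrig ![a, b + 2, c] := by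
  funext p
  have hθ : (Real.sin p.1 : ℂ) ^ 2 + (Real.cos p.1 : ℂ) ^ 2 = 1 := by
    exact_mod_cast congrArg (Complex.ofReal) (Real.sin_sq_add_cos_sq p.1)
  have hφ : (Real.sin p.2 : ℂ) ^ 2 + (Real.cos p.2 : ℂ) ^ 2 = 1 := by
    exact_mod_cast congrArg (Complex.ofReal) (Real.sin_sq_add_cos_sq p.2)
  simp only [fTrig, Pi.sub_apply, Matrix.cons_val_zero, Matrix.cons_val_one, Matrix.head_cons,
    Matrix.cons_val_two, Matrix.tail_cons]
  linear_combination
    ((Real.sin p.2 : ℂ) ^ a * (Real.cos p.2 : ℂ) ^ b * (Real.cos p.1 : ℂ) ^ c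
      * (Real.sin p.1 : ℂ) ^ (a + b)) * hθ +
    ((Real.sin p.2 : ℂ) ^ a * (Real.cos p.2 : ℂ) ^ b * (Real.cos p.1 : ℂ) ^ c
      * (Real.sin p.1 : ℂ) ^ (a + b) * (Real.sin p.1 : ℂ) ^ 2) * hφ

lemma fTrig_eq (i : Fin 3 → ℕ) : fTrig i = fTrig ![i 0, i 1, i 2] := by
  unfold fTrig
  norm_num
  rfl

theorem stmt14 (n : ℕ) :
    Submodule.span ℂ {g : ℝ × ℝ → ℂ | ∃ i : Fin 3 → ℕ, i 0 + i 1 + i 2 ≤ n ∧ g = fTrig i}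
      = Submodule.span ℂ
          {g : ℝ × ℝ → ℂ | ∃ i : Fin 3 → ℕ, i 0 + i 1 + i 2 ≤ n ∧ i 0 ≤ 1 ∧ g = fTrig i} := by
  apply le_antisymm
  · rw [Submodule.span_le]
    rintro g ⟨i, hle, rfl⟩
    have main : ∀ a b c : ℕ, a + b + c ≤ n →
        fTrig ![a, b, c] ∈ Submodule.span ℂ
          {g : ℝ × ℝ → ℂ | ∃ i : Fin 3 → ℕ, i 0 + i 1 + i 2 ≤ n ∧ i 0 ≤ 1 ∧ g = fTrig i} := by
      intro a
      induction a using Nat.strong_induction_on with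
      | _ a ih =>
        intro b c h
        match a, ih, h with
        | 0, _, h =>
          exact Submodule.subset_span ⟨![0, b, c], by simpa using h, by simp, rfl⟩
        | 1, _, h =>
          exact Submodule.subset_span ⟨![1, b, c], by simpa using h, by simp, rfl⟩
        | (a + 2), ih, h =>
          rw [fTrig_key]
          exact sub_mem (sub_mem (ih a (by omega) b c (by omega))
            (ih a (by omega) b (c + 2) (by omega))) (ih a (by omega) (b + 2) c (by omega))
    rw [fTrig_eq i]
    exact main (i 0) (i 1) (i 2) hle
  · apply Submodule.span_mono
    rintro g ⟨i, h1, _, h3⟩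
    exact ⟨i, h1, h3⟩
end

section
/- For n ∈ ℕ, let F_n be the span of the functions (θ,φ) ↦ (sin φ)^{i1} (cos φ)^{i2} (sin θ)^{i1+i2} (cos θ)^{i3} over multi-indices i ∈ ℕ₀³ with |i| ≤ n, and let G_n be the span of the functions (θ,φ) ↦ e^{imφ} (sin θ)^{|m|} (cos θ)^{l−|m|} over integers 0 ≤ l ≤ n and |m| ≤ l. Then F_n = G_n as subspaces of complex-valued functions on ℝ². -/
/-- Z_l^m(θ, φ) = e^{imφ} (sin θ)^{|m|} (cos θ)^{l−|m|}. -/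
noncomputable def zFun (l : ℕ) (m : ℤ) : ℝ × ℝ → ℂ :=
  fun p => Complex.exp (m * p.2 * Complex.I)
    * (Real.sin p.1 : ℂ) ^ m.natAbs * (Real.cos p.1 : ℂ) ^ (l - m.natAbs)

open Finset Complex

/-- Auxiliary family: h_{j,k,c}(θ,φ) = (e^{iφ} sin θ)^j (e^{-iφ} sin θ)^k (cos θ)^c. -/
noncomputable def hFun (j k c : ℕ) : ℝ × ℝ → ℂ :=
  fun p => (Complex.exp ((p.2 : ℂ) * Complex.I) * (Real.sin p.1 : ℂ)) ^ j
    * (Complex.exp (-(p.2 : ℂ) * Complex.I) * (Real.sin p.1 : ℂ)) ^ k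
    * (Real.cos p.1 : ℂ) ^ c

def Hset (n : ℕ) : Set (ℝ × ℝ → ℂ) := {g | ∃ j k c : ℕ, j + k + c ≤ n ∧ g = hFun j k c}

lemma mem_span_of_sum {S : Set (ℝ × ℝ → ℂ)} {g : ℝ × ℝ → ℂ} {ι : Type*}
    (s : Finset ι) (co : ι → ℂ) (f : ι → ℝ × ℝ → ℂ)
    (hf : ∀ x ∈ s, f x ∈ S) (hg : g = ∑ x ∈ s, co x • f x) :
    g ∈ Submodule.span ℂ S := by
  subst hg
  exact Submodule.sum_mem _ fun x hx =>
    Submodule.smul_mem _ _ (Submodule.subset_span (hf x hx))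

lemma hs_exp (r : ℝ) : (Real.sin r : ℂ) =
    (Complex.exp (-(r : ℂ) * Complex.I) - Complex.exp ((r : ℂ) * Complex.I)) * Complex.I / 2 := by
  rw [Complex.ofReal_sin, Complex.sin]

lemma hc_exp (r : ℝ) : (Real.cos r : ℂ) =
    (Complex.exp ((r : ℂ) * Complex.I) + Complex.exp (-(r : ℂ) * Complex.I)) / 2 := by
  rw [Complex.ofReal_cos, Complex.cos]

lemma alg1 (U V C : ℂ) (a b c : ℕ) :
    ((V - U) * Complex.I / 2) ^ a * ((U + V) / 2) ^ b * C ^ c =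
      ∑ s ∈ range (a+1), ∑ t ∈ range (b+1),
        ((a.choose s : ℂ) * (b.choose t) * (-1)^s * (Complex.I/2)^a * ((2:ℂ)⁻¹)^b) *
          (U ^ (s + t) * V ^ ((a - s) + (b - t)) * C ^ c) := by
  have h1 : (V - U) * Complex.I / 2 = ((-U) + V) * (Complex.I/2) := by ring
  have h2 : (U + V) / 2 = (U + V) * (2:ℂ)⁻¹ := by ring
  rw [h1, h2, mul_pow, mul_pow, add_pow, add_pow, Finset.sum_comm]
  simp only [Finset.sum_mul, Finset.mul_sum]
  refine Finset.sum_congr rfl fun t ht => Finset.sum_congr rfl fun s hs => ?_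
  simp only [Finset.mem_range] at hs ht
  obtain ⟨s', rfl⟩ : ∃ s', a = s + s' := ⟨a - s, by omega⟩
  obtain ⟨t', rfl⟩ : ∃ t', b = t + t' := ⟨b - t, by omega⟩
  simp only [Nat.add_sub_cancel_left]
  ring

lemma alg2 (x y w C : ℂ) (j k c : ℕ) :
    ((y + x * Complex.I) * w) ^ j * ((y - x * Complex.I) * w) ^ k * C ^ c =
      ∑ s ∈ range (j+1), ∑ t ∈ range (k+1),
        ((j.choose s : ℂ) * (k.choose t) * Complex.I ^ s * (-Complex.I) ^ t) *
          (x ^ (s + t) * y ^ ((j - s) + (k - t)) * w ^ ((s + t) + ((j - s) + (k - t))) * C ^ c) := by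
  have h1 : (y + x * Complex.I) * w = (x * Complex.I + y) * w := by ring
  have h2 : (y - x * Complex.I) * w = ((-(x * Complex.I)) + y) * w := by ring
  rw [h1, h2, mul_pow, mul_pow, add_pow, add_pow, Finset.sum_comm]
  simp only [Finset.sum_mul, Finset.mul_sum]
  refine Finset.sum_congr rfl fun t ht => Finset.sum_congr rfl fun s hs => ?_
  simp only [Finset.mem_range] at hs ht
  obtain ⟨s', rfl⟩ : ∃ s', j = s + s' := ⟨j - s, by omega⟩
  obtain ⟨t', rfl⟩ : ∃ t', k = t + t' := ⟨k - t, by omega⟩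
  simp only [Nat.add_sub_cancel_left]
  ring

lemma fTrig_mem (n : ℕ) (i : Fin 3 → ℕ) (hi : i 0 + i 1 + i 2 ≤ n) :
    fTrig i ∈ Submodule.span ℂ (Hset n) := by
  refine mem_span_of_sum (range (i 0 + 1) ×ˢ range (i 1 + 1))
    (fun q => ((i 0).choose q.1 : ℂ) * ((i 1).choose q.2) * (-1)^q.1
      * (Complex.I/2)^(i 0) * ((2:ℂ)⁻¹)^(i 1))
    (fun q => hFun (q.1 + q.2) ((i 0 - q.1) + (i 1 - q.2)) (i 2)) ?_ ?_
  · rintro ⟨s, t⟩ hq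
    simp only [Finset.mem_product, Finset.mem_range] at hq
    exact ⟨_, _, _, by omega, rfl⟩
  · funext p
    simp only [Finset.sum_apply, Pi.smul_apply, smul_eq_mul, fTrig, hFun]
    rw [hs_exp p.2, hc_exp p.2, Finset.sum_product]
    set E1 := Complex.exp ((p.2 : ℂ) * Complex.I)
    set E2 := Complex.exp (-(p.2 : ℂ) * Complex.I)
    set S := (Real.sin p.1 : ℂ)
    set C := (Real.cos p.1 : ℂ)
    have hb : ((E2 - E1) * Complex.I / 2) ^ (i 0) * ((E1 + E2) / 2) ^ (i 1)
        * S ^ (i 0 + i 1) * C ^ (i 2)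
      = ((E2 * S - E1 * S) * Complex.I / 2) ^ (i 0)
        * ((E1 * S + E2 * S) / 2) ^ (i 1) * C ^ (i 2) := by
      have e1 : ((E2 - E1) * Complex.I / 2) * S = (E2 * S - E1 * S) * Complex.I / 2 := by ring
      have e2 : ((E1 + E2) / 2) * S = (E1 * S + E2 * S) / 2 := by ring
      rw [← e1, ← e2, mul_pow, mul_pow, pow_add]; ring
    rw [hb]
    exact alg1 (E1 * S) (E2 * S) C (i 0) (i 1) (i 2)

lemma hFun_mem_F (n j k c : ℕ) (h : j + k + c ≤ n) :
    hFun j k c ∈ Submodule.span ℂ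
      {g : ℝ × ℝ → ℂ | ∃ i : Fin 3 → ℕ, i 0 + i 1 + i 2 ≤ n ∧ g = fTrig i} := by
  refine mem_span_of_sum (range (j+1) ×ˢ range (k+1))
    (fun q => (j.choose q.1 : ℂ) * (k.choose q.2) * Complex.I ^ q.1 * (-Complex.I) ^ q.2)
    (fun q => fTrig ![q.1 + q.2, (j - q.1) + (k - q.2), c]) ?_ ?_
  · rintro ⟨s, t⟩ hq
    simp only [Finset.mem_product, Finset.mem_range] at hq
    refine ⟨_, ?_, rfl⟩
    simp only [Matrix.cons_val_zero, Matrix.cons_val_one, Matrix.head_cons,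
      Matrix.cons_val_two, Matrix.tail_cons]
    omega
  · funext p
    simp only [Finset.sum_apply, Pi.smul_apply, smul_eq_mul, fTrig, hFun,
      Matrix.cons_val_zero, Matrix.cons_val_one, Matrix.head_cons,
      Matrix.cons_val_two, Matrix.tail_cons]
    rw [Complex.exp_mul_I, Complex.exp_mul_I, Complex.cos_neg, Complex.sin_neg,
      ← Complex.ofReal_sin, ← Complex.ofReal_cos, Finset.sum_product]
    set x := (Real.sin p.2 : ℂ)
    set y := (Real.cos p.2 : ℂ)
    set S := (Real.sin p.1 : ℂ)
    set C := (Real.cos p.1 : ℂ)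
    have e : y + -x * Complex.I = y - x * Complex.I := by ring
    rw [e]
    exact alg2 x y S C j k c

lemma zFun_mem_H (n l : ℕ) (m : ℤ) (hl : l ≤ n) (hml : m.natAbs ≤ l) :
    zFun l m ∈ Submodule.span ℂ (Hset n) := by
  refine Submodule.subset_span ⟨m.toNat, (-m).toNat, l - m.natAbs, by omega, ?_⟩
  funext p
  simp only [zFun, hFun]
  rw [mul_pow, mul_pow, ← Complex.exp_nat_mul, ← Complex.exp_nat_mul]
  have hS : (Real.sin p.1 : ℂ) ^ m.natAbs
      = (Real.sin p.1 : ℂ) ^ m.toNat * (Real.sin p.1 : ℂ) ^ (-m).toNat := by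
    rw [← pow_add]; congr 1; omega
  have h0 : ((m.toNat : ℤ) - ((-m).toNat : ℤ)) = m := by omega
  have h1 : ((m.toNat : ℂ)) - (((-m).toNat : ℂ)) = (m : ℂ) := by
    exact_mod_cast congrArg (fun z : ℤ => (z : ℂ)) h0
  have harg : Complex.exp ((m : ℂ) * p.2 * Complex.I)
      = Complex.exp ((m.toNat : ℂ) * ((p.2 : ℂ) * Complex.I))
        * Complex.exp (((-m).toNat : ℂ) * (-(p.2 : ℂ) * Complex.I)) := by
    rw [← Complex.exp_add]
    congr 1
    linear_combination (-(p.2 : ℂ) * Complex.I) * h1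
  rw [harg, hS]
  ring

lemma hFun_mem_G (n j k c : ℕ) (h : j + k + c ≤ n) :
    hFun j k c ∈ Submodule.span ℂ
      {g : ℝ × ℝ → ℂ | ∃ (l : ℕ) (m : ℤ), l ≤ n ∧ m.natAbs ≤ l ∧ g = zFun l m} := by
  set q := min j k with hq
  set m : ℤ := (j : ℤ) - k with hm
  refine mem_span_of_sum (range (q+1))
    (fun t => (-1 : ℂ) ^ t * (q.choose t)) (fun t => zFun (m.natAbs + c + 2*t) m) ?_ ?_
  · intro t ht
    simp only [Finset.mem_range] at ht
    exact ⟨_, _, by omega, by omega, rfl⟩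
  · funext p
    simp only [Finset.sum_apply, Pi.smul_apply, smul_eq_mul, hFun, zFun]
    have he : ∀ t : ℕ, (m.natAbs + c + 2*t) - m.natAbs = c + 2*t := fun t => by omega
    simp only [he]
    set S := (Real.sin p.1 : ℂ) with hSdef
    set C := (Real.cos p.1 : ℂ) with hCdef
    have hSC : S ^ 2 = 1 - C ^ 2 := by
      have h2 : S ^ 2 + C ^ 2 = 1 := by
        rw [hSdef, hCdef]; exact_mod_cast Real.sin_sq_add_cos_sq p.1
      linear_combination h2
    have hexp : Complex.exp ((p.2 : ℂ) * Complex.I) ^ j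
          * Complex.exp (-(p.2 : ℂ) * Complex.I) ^ k
        = Complex.exp ((m : ℂ) * p.2 * Complex.I) := by
      rw [← Complex.exp_nat_mul, ← Complex.exp_nat_mul, ← Complex.exp_add]
      congr 1
      have hmc : (m : ℂ) = (j : ℂ) - (k : ℂ) := by rw [hm]; push_cast; ring
      rw [hmc]; ring
    calc (Complex.exp ((p.2 : ℂ) * Complex.I) * S) ^ j
          * (Complex.exp (-(p.2 : ℂ) * Complex.I) * S) ^ k * C ^ c
        = (Complex.exp ((p.2 : ℂ) * Complex.I) ^ j
            * Complex.exp (-(p.2 : ℂ) * Complex.I) ^ k)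
          * (S ^ (m.natAbs + 2*q) * C ^ c) := by
          rw [mul_pow, mul_pow, show m.natAbs + 2*q = j + k from by omega, pow_add]; ring
      _ = Complex.exp ((m : ℂ) * p.2 * Complex.I)
            * (S ^ m.natAbs * ((1 - C ^ 2) ^ q * C ^ c)) := by
          rw [hexp, pow_add, pow_mul, hSC]; ring
      _ = ∑ t ∈ range (q+1), ((-1 : ℂ) ^ t * (q.choose t))
            * (Complex.exp ((m : ℂ) * p.2 * Complex.I) * S ^ m.natAbs * C ^ (c + 2*t)) := by
          rw [show (1 : ℂ) - C ^ 2 = (-(C ^ 2)) + 1 from by ring, add_pow]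
          simp only [one_pow, Finset.mul_sum, Finset.sum_mul]
          refine Finset.sum_congr rfl fun t ht => ?_
          have hC : C ^ (c + 2*t) = C ^ c * (C ^ 2) ^ t := by rw [pow_add, pow_mul]
          rw [hC]; ring

theorem stmt15 (n : ℕ) :
    Submodule.span ℂ {g : ℝ × ℝ → ℂ | ∃ i : Fin 3 → ℕ, i 0 + i 1 + i 2 ≤ n ∧ g = fTrig i}
      = Submodule.span ℂ
          {g : ℝ × ℝ → ℂ | ∃ (l : ℕ) (m : ℤ), l ≤ n ∧ m.natAbs ≤ l ∧ g = zFun l m} := by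
  have hHG : Submodule.span ℂ (Hset n) ≤ Submodule.span ℂ
      {g : ℝ × ℝ → ℂ | ∃ (l : ℕ) (m : ℤ), l ≤ n ∧ m.natAbs ≤ l ∧ g = zFun l m} := by
    rw [Submodule.span_le]
    rintro g ⟨j, k, c, h, rfl⟩
    exact hFun_mem_G n j k c h
  have hHF : Submodule.span ℂ (Hset n) ≤ Submodule.span ℂ
      {g : ℝ × ℝ → ℂ | ∃ i : Fin 3 → ℕ, i 0 + i 1 + i 2 ≤ n ∧ g = fTrig i} := by
    rw [Submodule.span_le]
    rintro g ⟨j, k, c, h, rfl⟩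
    exact hFun_mem_F n j k c h
  apply le_antisymm
  · rw [Submodule.span_le]
    rintro g ⟨i, hi, rfl⟩
    exact hHG (fTrig_mem n i hi)
  · rw [Submodule.span_le]
    rintro g ⟨l, m, hl, hml, rfl⟩
    exact hHF (zFun_mem_H n l m hl hml)
end

section
/- For n ∈ ℕ, the span over ℂ of the functions Z_l^m(θ,φ) = e^{imφ} (sin θ)^{|m|} (cos θ)^{l−|m|}, for integers 0 ≤ l ≤ n and −l ≤ m ≤ l, restricted to (θ,φ) ∈ (0,π) × [0,2π), has dimension exactly (n+1)². -/
/-- The domain (0, π) × [0, 2π). -/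
def sphDom : Type := {p : ℝ × ℝ // p.1 ∈ Set.Ioo 0 Real.pi ∧ p.2 ∈ Set.Ico 0 (2 * Real.pi)}

/-- Z_l^m(θ, φ) = e^{imφ} (sin θ)^{|m|} (cos θ)^{l−|m|}, restricted to (0, π) × [0, 2π). -/
noncomputable def zRes (l : ℕ) (m : ℤ) : sphDom → ℂ :=
  fun p => Complex.exp (m * p.val.2 * Complex.I)
    * (Real.sin p.val.1 : ℂ) ^ m.natAbs * (Real.cos p.val.1 : ℂ) ^ (l - m.natAbs)



lemma poly_helper {α : Type} (t : Finset α) (c : α → ℂ) (e : α → ℕ)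
    (he : Set.InjOn e t) (S : Set ℂ) (hS : S.Infinite)
    (h : ∀ z ∈ S, ∑ a ∈ t, c a * z ^ e a = 0) : ∀ a ∈ t, c a = 0 := by
  classical
  set P : Polynomial ℂ := ∑ a ∈ t, Polynomial.C (c a) * Polynomial.X ^ e a with hP
  have hP0 : P = 0 := by
    apply Polynomial.eq_zero_of_infinite_isRoot
    apply hS.mono
    intro z hz
    simp only [Set.mem_setOf_eq, Polynomial.IsRoot, hP, Polynomial.eval_finset_sum,
      Polynomial.eval_mul, Polynomial.eval_C, Polynomial.eval_pow, Polynomial.eval_X]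
    exact h z hz
  intro a ha
  have h2 := congrArg (fun q => Polynomial.coeff q (e a)) hP0
  simp only [hP, Polynomial.finset_sum_coeff, Polynomial.coeff_C_mul, Polynomial.coeff_X_pow,
    Polynomial.coeff_zero] at h2
  rw [Finset.sum_eq_single_of_mem a ha] at h2
  · simpa using h2
  · intro b hb hba
    rw [if_neg, mul_zero]
    exact fun hcontra => hba (he hb ha hcontra.symm)

lemma circle_infinite : ((fun φ : ℝ => Complex.exp (φ * Complex.I)) '' Set.Ico 0 (2*Real.pi)).Infinite := by
  apply Set.Infinite.image
  · intro x hx y hy hxy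
    rw [Complex.exp_eq_exp_iff_exists_int] at hxy
    obtain ⟨k, hk⟩ := hxy
    have him := congrArg Complex.im hk
    simp at him
    -- him : x = y + k * (2*π) roughly
    have hk0 : k = 0 := by
      rcases hx with ⟨hx1, hx2⟩
      rcases hy with ⟨hy1, hy2⟩
      have hpi := Real.pi_pos
      rcases lt_trichotomy k 0 with h | h | h
      · have hk1 : k ≤ -1 := by omega
        have : (k : ℝ) ≤ -1 := by exact_mod_cast hk1
        nlinarith
      · exact h
      · have : (1:ℝ) ≤ (k : ℝ) := by exact_mod_cast h
        nlinarith
    rw [hk0] at him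
    simpa using him
  · rw [← Set.infinite_coe_iff]
    exact Set.Ico.infinite (by positivity)

lemma cos_image_infinite : ((fun θ : ℝ => (Real.cos θ : ℂ)) '' Set.Ioo 0 Real.pi).Infinite := by
  apply Set.Infinite.image
  · intro x hx y hy hxy
    have : Real.cos x = Real.cos y := Complex.ofReal_inj.mp (by simpa using hxy)
    exact Real.injOn_cos (Set.mem_Icc_of_Ioo hx) (Set.mem_Icc_of_Ioo hy) this
  · rw [← Set.infinite_coe_iff]
    exact Set.Ioo.infinite Real.pi_pos

lemma key (n : ℕ) (t : Finset (ℕ × ℤ)) (ht : ∀ p ∈ t, p.2.natAbs ≤ p.1 ∧ p.1 ≤ n)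
    (c : ℕ × ℤ → ℂ) (h : ∑ p ∈ t, c p • zRes p.1 p.2 = 0) : ∀ p ∈ t, c p = 0 := by
  classical
  -- w p θ : the θ-dependent part
  set w : ℕ × ℤ → ℝ → ℂ :=
    fun p θ => (Real.sin θ : ℂ) ^ p.2.natAbs * (Real.cos θ : ℂ) ^ (p.1 - p.2.natAbs) with hw
  have hpt : ∀ θ ∈ Set.Ioo 0 Real.pi, ∀ φ ∈ Set.Ico 0 (2*Real.pi),
      ∑ p ∈ t, c p * w p θ * (Complex.exp ((φ:ℂ) * Complex.I)) ^ p.2 = 0 := by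
    intro θ hθ φ hφ
    have h0 := congrFun h ⟨(θ, φ), hθ, hφ⟩
    erw [Finset.sum_apply] at h0
    change ∑ p ∈ t, c p * (Complex.exp (p.2 * φ * Complex.I) * (Real.sin θ : ℂ) ^ p.2.natAbs * (Real.cos θ : ℂ) ^ (p.1 - p.2.natAbs)) = 0 at h0
    rw [← h0]
    apply Finset.sum_congr rfl
    intro p hp
    rw [hw]
    have : ((p.2 : ℂ)) * (φ:ℂ) * Complex.I = (p.2 : ℂ) * ((φ:ℂ) * Complex.I) := by ring
    rw [this, Complex.exp_int_mul]
    ring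
  -- Step A: for each θ, the grouped coefficients vanish
  have hA : ∀ θ ∈ Set.Ioo 0 Real.pi, ∀ m ∈ t.image Prod.snd,
      (∑ p ∈ t.filter (fun p => p.2 = m), c p * w p θ) = 0 := by
    intro θ hθ
    apply poly_helper (t.image Prod.snd)
      (fun m => ∑ p ∈ t.filter (fun p => p.2 = m), c p * w p θ)
      (fun m => (m + n).toNat)
      ?inj _ circle_infinite ?van
    case inj =>
      intro a ha b hb hab
      simp only [Finset.coe_image, Set.mem_image, Finset.mem_coe] at ha hb
      obtain ⟨pa, hpa, rfl⟩ := ha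
      obtain ⟨pb, hpb, rfl⟩ := hb
      have h1 := ht pa hpa
      have h2 := ht pb hpb
      simp only at hab
      omega
    case van =>
      rintro z ⟨φ, hφ, rfl⟩
      set z := Complex.exp ((φ:ℂ) * Complex.I) with hzdef
      have hz : z ≠ 0 := Complex.exp_ne_zero _
      have hsum := hpt θ hθ φ hφ
      have heq := Finset.sum_image'
        (f := fun m => (∑ p ∈ t.filter (fun p => p.2 = m), c p * w p θ) * z ^ ((m + (n:ℤ)).toNat))
        (g := Prod.snd) (s := t)
        (fun q => c q * w q θ * z ^ q.2 * z ^ n) ?H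
      case H =>
        intro p hp
        rw [Finset.sum_mul]
        apply Finset.sum_congr rfl
        intro q hq
        rw [Finset.mem_filter] at hq
        have hq2 : q.2 = p.2 := hq.2
        have hb := ht q hq.1
        have hnn : (0:ℤ) ≤ p.2 + n := by omega
        have : ((p.2 + (n:ℤ)).toNat : ℤ) = q.2 + n := by omega
        rw [← zpow_natCast z ((p.2 + (n:ℤ)).toNat), this, zpow_add₀ hz, zpow_natCast]
        ring
      rw [heq, ← Finset.sum_mul, hsum, zero_mul]
  -- Step B
  intro p₀ hp₀
  have hm : p₀.2 ∈ t.image Prod.snd := Finset.mem_image_of_mem _ hp₀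
  have hB : ∀ q ∈ t.filter (fun p => p.2 = p₀.2), c q = 0 := by
    apply poly_helper (t.filter (fun p => p.2 = p₀.2)) c (fun q => q.1 - p₀.2.natAbs)
      ?inj2 _ cos_image_infinite ?van2
    case inj2 =>
      intro a ha b hb hab
      simp only [Finset.coe_filter, Set.mem_setOf_eq] at ha hb
      have h1 := ht a ha.1
      have h2 := ht b hb.1
      simp only at hab
      have : a.1 = b.1 := by omega
      exact Prod.ext this (ha.2.trans hb.2.symm)
    case van2 =>
      rintro x ⟨θ, hθ, rfl⟩
      have hs : (Real.sin θ : ℂ) ≠ 0 := by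
        exact Complex.ofReal_ne_zero.mpr (Real.sin_pos_of_pos_of_lt_pi hθ.1 hθ.2).ne'
      have hA0 := hA θ hθ p₀.2 hm
      have : ∑ q ∈ t.filter (fun p => p.2 = p₀.2), c q * w q θ
          = (Real.sin θ : ℂ) ^ p₀.2.natAbs *
            ∑ q ∈ t.filter (fun p => p.2 = p₀.2), c q * (Real.cos θ : ℂ) ^ (q.1 - p₀.2.natAbs) := by
        rw [Finset.mul_sum]
        apply Finset.sum_congr rfl
        intro q hq
        rw [Finset.mem_filter] at hq
        rw [hw]
        simp only [hq.2]
        ring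
      rw [this] at hA0
      rcases mul_eq_zero.mp hA0 with h' | h'
      · exact absurd h' (pow_ne_zero _ hs)
      · exact h'
  exact hB p₀ (Finset.mem_filter.mpr ⟨hp₀, rfl⟩)

theorem stmt16 (n : ℕ) :
    Module.finrank ℂ (Submodule.span ℂ
      {g : sphDom → ℂ | ∃ (l : ℕ) (m : ℤ), l ≤ n ∧ m.natAbs ≤ l ∧ g = zRes l m})
      = (n + 1)^2 := by
  classical
  set s : Finset (ℕ × ℤ) :=
    (Finset.range (n+1)).biUnion (fun l => (Finset.Icc (-(l:ℤ)) l).image (fun m => (l, m))) with hs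
  have hmem : ∀ p : ℕ × ℤ, p ∈ s ↔ p.1 ≤ n ∧ p.2.natAbs ≤ p.1 := by
    intro p
    simp only [hs, Finset.mem_biUnion, Finset.mem_range, Finset.mem_image, Finset.mem_Icc]
    constructor
    · rintro ⟨l, hl, m, hm, rfl⟩
      omega
    · rintro ⟨h1, h2⟩
      exact ⟨p.1, by omega, p.2, by omega, rfl⟩
  have hcard : s.card = (n+1)^2 := by
    rw [hs, Finset.card_biUnion]
    · have : ∀ l ∈ Finset.range (n+1),
          ((Finset.Icc (-(l:ℤ)) l).image (fun m => (l, m))).card = 2*l + 1 := by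
        intro l _
        rw [Finset.card_image_of_injective _ (fun a b hab => (Prod.mk.injEq _ _ _ _).mp hab |>.2),
          Int.card_Icc]
        omega
      rw [Finset.sum_congr rfl this]
      have sq : ∀ N : ℕ, ∑ x ∈ Finset.range N, (2*x + 1) = N^2 := by
        intro N
        induction N with
        | zero => simp
        | succ k ih => rw [Finset.sum_range_succ, ih]; ring
      exact sq (n+1)
    · intro x _ y _ hxy
      simp only [Finset.disjoint_left, Finset.mem_image]
      rintro p ⟨m, _, rfl⟩ ⟨m', _, h'⟩
      exact hxy ((Prod.mk.injEq _ _ _ _).mp h' |>.1).symm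
  have li : LinearIndependent ℂ (fun p : {x // x ∈ s} => zRes (p : ℕ × ℤ).1 (p : ℕ × ℤ).2) := by
    rw [linearIndependent_iff']
    intro u g hg i hi
    set c : ℕ × ℤ → ℂ := fun p => if h : p ∈ s then g ⟨p, h⟩ else 0 with hc
    have hsum : ∑ p ∈ u.image Subtype.val, c p • zRes p.1 p.2 = 0 := by
      rw [Finset.sum_image (fun a _ b _ hab => Subtype.ext hab)]
      rw [← hg]
      apply Finset.sum_congr rfl
      intro j _
      rw [hc]
      simp only [j.2, dif_pos]
    have := key n (u.image Subtype.val)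
      (fun p hp => by
        rw [Finset.mem_image] at hp
        obtain ⟨j, _, rfl⟩ := hp
        have := (hmem j).mp j.2
        exact ⟨this.2, this.1⟩)
      c hsum i (Finset.mem_image_of_mem _ hi)
    rw [hc] at this
    simpa [i.2] using this
  have hrange : Set.range (fun p : {x // x ∈ s} => zRes (p : ℕ × ℤ).1 (p : ℕ × ℤ).2)
      = {g : sphDom → ℂ | ∃ (l : ℕ) (m : ℤ), l ≤ n ∧ m.natAbs ≤ l ∧ g = zRes l m} := by
    ext g
    constructor
    · rintro ⟨⟨⟨l, m⟩, hp⟩, rfl⟩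
      have := (hmem (l, m)).mp hp
      exact ⟨l, m, this.1, this.2, rfl⟩
    · rintro ⟨l, m, h1, h2, rfl⟩
      exact ⟨⟨(l, m), (hmem (l, m)).mpr ⟨h1, h2⟩⟩, rfl⟩
  rw [← hrange, finrank_span_eq_card li, Fintype.card_coe, hcard]
end
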